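/- arXiv:2507.18259 — 4 statements merged into one kernel-verified Lean document; each statement's English description precedes it below -/
import Mathlib

section
/- Let Q be an orthogonal projection on a Hilbert space H and let ρ be a density operator on the k-fold tensor power H^{⊗k}. If for every i ∈ {1,…,k} the reduced state tr_{≠i}(ρ) (the partial trace over all tensor factors except the i-th) satisfies tr(Q · tr_{≠i}(ρ)) ≥ 1 − ε, then tr(Q^{⊗k} ρ) ≥ 1 − k·ε. -/
/-!
Let `E i` be `Q` acting on the `i`-th tensor factor, so that `tr (E i ρ) = tr (Q tr_{≠i} ρ)` and
`Q^{⊗k}` is the product of the pairwise commuting projections `E i`. For commuting projections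
`p, q` the difference `(1 - p) + (1 - q) - (1 - p q) = (1 - p) (1 - q)` is again a projection,
hence positive; by induction `1 - Q^{⊗k} ≤ ∑ i, (1 - E i)` in the Loewner order. Pairing this
operator union bound with the density matrix `ρ` gives
`1 - tr (Q^{⊗k} ρ) ≤ ∑ i, (1 - tr (E i ρ)) ≤ k ε`.
-/

open Finset
open scoped ComplexOrder

/-- k-fold tensor power of a single-system operator, as a matrix on `Fin k → Fin d`. -/
noncomputable def tensorPow {d k : ℕ} (Q : Matrix (Fin d) (Fin d) ℂ) :
    Matrix (Fin k → Fin d) (Fin k → Fin d) ℂ :=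
  fun fa fb => ∏ j, Q (fa j) (fb j)

/-- Partial trace over all tensor factors except the `i`-th one. -/
noncomputable def ptraceExcept {d k : ℕ} (i : Fin k)
    (ρ : Matrix (Fin k → Fin d) (Fin k → Fin d) ℂ) : Matrix (Fin d) (Fin d) ℂ :=
  fun a b => ∑ f : {j : Fin k // j ≠ i} → Fin d,
    ρ (fun j => if h : j = i then a else f ⟨j, h⟩)
      (fun j => if h : j = i then b else f ⟨j, h⟩)

open scoped Kronecker MatrixOrder

theorem IsStarProjection.one_sub_mul_le_one_sub_add_one_sub {R : Type*} [Ring R] [PartialOrder R]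
    [StarRing R] [StarOrderedRing R] {p q : R} (hp : IsStarProjection p)
    (hq : IsStarProjection q) (hpq : Commute p q) : 1 - p * q ≤ (1 - p) + (1 - q) := by
  have hcomm : Commute (1 - p) (1 - q) :=
    (Commute.one_right _).sub_right ((Commute.one_left q).sub_left hpq)
  rw [← sub_nonneg]
  convert (hp.one_sub.mul hq.one_sub hcomm).nonneg using 1
  noncomm_ring

namespace Matrix

section piKronecker

variable {ι α l m n : Type*} [Fintype ι]

def piKronecker [CommMonoid α] (A : ι → Matrix m n α) : Matrix (ι → m) (ι → n) α :=
  of fun x y => ∏ j, A j (x j) (y j)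

@[simp]
lemma piKronecker_apply [CommMonoid α] (A : ι → Matrix m n α) (x : ι → m) (y : ι → n) :
    piKronecker A x y = ∏ j, A j (x j) (y j) :=
  rfl

lemma piKronecker_mul [CommSemiring α] [DecidableEq ι] [Fintype m] (A : ι → Matrix l m α)
    (B : ι → Matrix m n α) : piKronecker A * piKronecker B = piKronecker fun j => A j * B j := by
  ext x z
  simp only [piKronecker_apply, mul_apply, prod_univ_sum, Fintype.piFinset_univ, prod_mul_distrib]

lemma piKronecker_one [CommMonoidWithZero α] [DecidableEq n] :
    piKronecker (fun _ : ι => (1 : Matrix n n α)) = 1 := by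
  ext x y
  simp [one_apply, Fintype.prod_boole, funext_iff]

lemma conjTranspose_piKronecker [CommSemiring α] [StarRing α] (A : ι → Matrix m n α) :
    (piKronecker A)ᴴ = piKronecker fun j => (A j)ᴴ := by
  ext x y
  simp [star_prod]

lemma commute_piKronecker [CommSemiring α] [DecidableEq ι] [Fintype n] {A B : ι → Matrix n n α}
    (h : ∀ j, Commute (A j) (B j)) : Commute (piKronecker A) (piKronecker B) := by
  rw [Commute, SemiconjBy, piKronecker_mul, piKronecker_mul]
  exact congrArg piKronecker (funext h)

lemma isStarProjection_piKronecker [CommSemiring α] [StarRing α] [DecidableEq ι] [Fintype n]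
    {A : ι → Matrix n n α} (h : ∀ j, IsStarProjection (A j)) :
    IsStarProjection (piKronecker A) where
  isIdempotentElem := by
    rw [IsIdempotentElem, piKronecker_mul]
    exact congrArg piKronecker (funext fun j => (h j).isIdempotentElem)
  isSelfAdjoint := by
    rw [IsSelfAdjoint, star_eq_conjTranspose, conjTranspose_piKronecker]
    exact congrArg piKronecker (funext fun j => (h j).isSelfAdjoint)

lemma piKronecker_eq_submatrix_kronecker [CommMonoid α] [DecidableEq ι] (A : ι → Matrix m n α)
    (i : ι) : piKronecker A = (A i ⊗ₖ piKronecker fun j : {j // j ≠ i} => A j).submatrix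
      (Equiv.funSplitAt i m) (Equiv.funSplitAt i n) := by
  ext x y
  simp [Fintype.prod_eq_mul_prod_subtype_ne _ i]

end piKronecker

section partialTrace

variable {α l m n : Type*}

def partialTraceRight [AddCommMonoid α] [Fintype n] (M : Matrix (l × n) (m × n) α) :
    Matrix l m α :=
  of fun a b => ∑ f, M (a, f) (b, f)

lemma trace_kronecker_one_mul [CommSemiring α] [Fintype l] [Fintype m] [Fintype n]
    [DecidableEq n] (A : Matrix l m α) (M : Matrix (m × n) (l × n) α) :
    trace ((A ⊗ₖ (1 : Matrix n n α)) * M) = trace (A * partialTraceRight M) := by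
  simp only [trace, diag_apply, mul_apply, kroneckerMap_apply, one_apply, mul_ite, mul_one,
    mul_zero, ite_mul, zero_mul, Fintype.sum_prod_type, sum_ite_eq, mem_univ, ↓reduceIte,
    partialTraceRight, of_apply, mul_sum]
  exact sum_congr rfl fun a _ => sum_comm

lemma trace_submatrix_equiv [AddCommMonoid α] [Fintype m] [Fintype n] (M : Matrix m m α)
    (e : n ≃ m) : trace (M.submatrix e e) = trace M :=
  e.sum_comp fun i => M i i

lemma trace_submatrix_mul_equiv [CommSemiring α] [Fintype m] [Fintype n] (A : Matrix m m α)
    (B : Matrix n n α) (e : n ≃ m) :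
    trace (A.submatrix e e * B) = trace (A * B.submatrix e.symm e.symm) := by
  rw [← trace_submatrix_equiv (A * _) e, ← submatrix_mul_equiv _ _ _ e, submatrix_submatrix,
    e.symm_comp_self, submatrix_id_id]

lemma trace_piKronecker_mulSingle_mul {ι : Type*} [CommSemiring α] [Fintype ι] [DecidableEq ι]
    [Fintype n] [DecidableEq n] (Q : Matrix n n α) (i : ι) (ρ : Matrix (ι → n) (ι → n) α) :
    trace (piKronecker (Pi.mulSingle i Q) * ρ) = trace (Q * partialTraceRight
      (ρ.submatrix (Equiv.funSplitAt i n).symm (Equiv.funSplitAt i n).symm)) := by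
  have hrest : (fun j : {j // j ≠ i} => (Pi.mulSingle i Q : ι → Matrix n n α) j) = fun _ => 1 :=
    funext fun j => by simp [j.2]
  rw [← trace_kronecker_one_mul, piKronecker_eq_submatrix_kronecker _ i, Pi.mulSingle_eq_same,
    hrest, piKronecker_one, trace_submatrix_mul_equiv]

end partialTrace

section LoewnerOrder

variable {ι n 𝕜 : Type*} [Fintype n] [RCLike 𝕜]

lemma PosSemidef.trace_mul_nonneg [DecidableEq n] {A B : Matrix n n 𝕜} (hA : A.PosSemidef)
    (hB : B.PosSemidef) : 0 ≤ (A * B).trace := by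
  obtain ⟨C, rfl⟩ := CStarAlgebra.nonneg_iff_eq_star_mul_self.mp hA.nonneg
  rw [Matrix.mul_assoc, trace_mul_comm]
  exact (hB.mul_mul_conjTranspose_same C).trace_nonneg

lemma trace_mul_le_trace_mul_of_le [DecidableEq n] {X Y ρ : Matrix n n 𝕜} (hρ : ρ.PosSemidef)
    (h : X ≤ Y) : (X * ρ).trace ≤ (Y * ρ).trace := by
  rw [← sub_nonneg, ← trace_sub, ← sub_mul]
  exact (le_iff.mp h).trace_mul_nonneg hρ

lemma one_sub_piKronecker_le_sum [Fintype ι] [DecidableEq ι] [DecidableEq n] {Q : Matrix n n 𝕜}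
    (hQ : IsStarProjection Q) (S : Finset ι) :
    1 - piKronecker (fun j => if j ∈ S then Q else 1) ≤
      ∑ i ∈ S, (1 - piKronecker (Pi.mulSingle i Q)) := by
  have hproj (P : Prop) [Decidable P] : IsStarProjection (if P then Q else 1) := by
    split_ifs
    exacts [hQ, .one _]
  induction S using Finset.induction with
  | empty => simp [piKronecker_one]
  | @insert i S hiS ih =>
    have hsplit : piKronecker (fun j => if j ∈ insert i S then Q else 1) =
        piKronecker (Pi.mulSingle i Q) * piKronecker (fun j => if j ∈ S then Q else 1) := by
      rw [piKronecker_mul]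
      congr 1
      ext1 j
      by_cases hj : j = i
      · subst hj; simp [hiS]
      · simp [hj]
    have hsite : IsStarProjection (piKronecker (Pi.mulSingle i Q)) :=
      isStarProjection_piKronecker fun j => by rw [Pi.mulSingle_apply]; exact hproj _
    have hcomm : Commute (piKronecker (Pi.mulSingle i Q))
        (piKronecker fun j => if j ∈ S then Q else 1) :=
      commute_piKronecker fun j => by rw [Pi.mulSingle_apply]; split_ifs <;> simp
    rw [hsplit, sum_insert hiS]
    exact (hsite.one_sub_mul_le_one_sub_add_one_sub
      (isStarProjection_piKronecker fun j => hproj _) hcomm).trans (add_le_add_right ih _)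

end LoewnerOrder

end Matrix

open Matrix

lemma ptraceExcept_eq_partialTraceRight {d k : ℕ} (i : Fin k)
    (ρ : Matrix (Fin k → Fin d) (Fin k → Fin d) ℂ) :
    ptraceExcept i ρ = partialTraceRight
      (ρ.submatrix (Equiv.funSplitAt i (Fin d)).symm (Equiv.funSplitAt i (Fin d)).symm) := by
  ext a b
  refine sum_congr rfl fun f _ => ?_
  congr 1 <;> ext j <;> simp [Equiv.funSplitAt_symm_apply]

/-- if every single-site marginal of the density operator ρ has
`tr(Q ⋅ tr_{≠i} ρ) ≥ 1 - ε` for a projection `Q`, then `tr(Q^{⊗k} ρ) ≥ 1 - k ε`. -/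
theorem local_to_global_trace_bound {d k : ℕ} (ε : ℝ)
    (ρ : Matrix (Fin k → Fin d) (Fin k → Fin d) ℂ)
    (hρpos : ρ.PosSemidef) (hρtr : ρ.trace = 1)
    (Q : Matrix (Fin d) (Fin d) ℂ) (hQherm : Q.IsHermitian) (hQproj : Q * Q = Q)
    (h : ∀ i : Fin k, 1 - ε ≤ ((Q * ptraceExcept i ρ).trace).re) :
    1 - k * ε ≤ (((tensorPow Q : Matrix (Fin k → Fin d) (Fin k → Fin d) ℂ) * ρ).trace).re := by
  have hcompl (X : Matrix (Fin k → Fin d) (Fin k → Fin d) ℂ) :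
      ((1 - X) * ρ).trace.re = 1 - (X * ρ).trace.re := by
    rw [sub_mul, one_mul, trace_sub, hρtr, Complex.sub_re, Complex.one_re]
  have hsite (i : Fin k) : ((1 - piKronecker (Pi.mulSingle i Q)) * ρ).trace.re ≤ ε := by
    have := h i
    rw [ptraceExcept_eq_partialTraceRight, ← trace_piKronecker_mulSingle_mul] at this
    linarith [hcompl (piKronecker (Pi.mulSingle i Q))]
  have hunion : 1 - tensorPow Q ≤ ∑ i : Fin k, (1 - piKronecker (Pi.mulSingle i Q)) := by
    have := one_sub_piKronecker_le_sum (ι := Fin k) ⟨hQproj, hQherm⟩ univ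
    simp only [mem_univ, if_true] at this
    exact this
  have hbound : ((1 - tensorPow Q) * ρ).trace.re ≤ k * ε := calc
    _ ≤ ∑ i : Fin k, ((1 - piKronecker (Pi.mulSingle i Q)) * ρ).trace.re := by
      simpa only [sum_mul, trace_sum, Complex.re_sum] using
        Complex.re_le_re (trace_mul_le_trace_mul_of_le hρpos hunion)
    _ ≤ ∑ _i : Fin k, ε := sum_le_sum fun i _ => hsite i
    _ = k * ε := by simp
  linarith [hcompl (tensorPow Q)]
end

section
/- Let ρ be a single-mode bosonic density operator of the form ρ = ∫ P_β(0) dμ(β), where P_β(0) is the phase-randomized coherent state of amplitude β and μ is a sub-Gaussian probability measure on ℂ with constant K (i.e. μ({β : |β| ≥ t}) ≤ 2exp(−t²/K²)). Assume that for every β with |β|² ≤ N/22 and N ≥ 44 the bound tr(P_N P_β(0)) ≥ 1 − 4^{−N} holds, where P_N = ∑_{n=0}^{N−1} |n⟩⟨n|. Then tr(P_N ρ) ≥ 1 − 2^{2 − N·min{2, (log₂e)/(22K²)}}. -/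
/-!
Split ℂ into the disc `‖β‖² ≤ N/22`, where the Poisson bound gives `tr(P_N P_β(0)) ≥ 1 - 4^{-N}`,
and its complement, whose mass is at most `2 exp(-N/(22K²))` by sub-Gaussianity. Since the
integrand is nonnegative, `tr(P_N ρ) ≥ 1 - 4^{-N} - 2 exp(-N/(22K²))`, and both error terms are
at most `2^{-N·min{2, log₂ e/(22K²)}}`.
-/

open MeasureTheory Real

lemma measureReal_compl_setOf_sq_norm_le_of_subGaussian {E : Type*} [NormedAddCommGroup E]
    [MeasurableSpace E] {μ : Measure E} [IsFiniteMeasure μ] {K R : ℝ}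
    (hsubG : ∀ t : ℝ, 0 ≤ t → μ.real {x | t ≤ ‖x‖} ≤ 2 * exp (-t ^ 2 / K ^ 2)) (hR : 0 ≤ R) :
    μ.real {x : E | ‖x‖ ^ 2 ≤ R}ᶜ ≤ 2 * exp (-R / K ^ 2) := by
  have hsub : {x : E | ‖x‖ ^ 2 ≤ R}ᶜ ⊆ {x | √R ≤ ‖x‖} := fun x hx =>
    (sqrt_le_left (norm_nonneg x)).mpr (le_of_lt (not_le.mp hx))
  calc μ.real {x : E | ‖x‖ ^ 2 ≤ R}ᶜ ≤ μ.real {x | √R ≤ ‖x‖} := measureReal_mono hsub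
    _ ≤ 2 * exp (-R / K ^ 2) := by simpa [sq_sqrt hR] using hsubG √R (sqrt_nonneg R)

lemma one_sub_sub_le_integral_of_measureReal_compl_le {α : Type*} [MeasurableSpace α]
    {μ : Measure α} [IsProbabilityMeasure μ] {f : α → ℝ} {s : Set α} {a ε : ℝ}
    (hf : Integrable f μ) (hf0 : ∀ x, 0 ≤ f x) (hs : MeasurableSet s)
    (hfs : ∀ x ∈ s, 1 - a ≤ f x) (ha : 0 ≤ a) (hsc : μ.real sᶜ ≤ ε) :
    1 - a - ε ≤ ∫ x, f x ∂μ := by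
  have hs_mass : μ.real s = 1 - μ.real sᶜ := by rw [probReal_compl_eq_one_sub hs]; ring
  have hsc0 : 0 ≤ μ.real sᶜ := measureReal_nonneg
  calc 1 - a - ε ≤ (1 - a) * μ.real s := by rw [hs_mass]; nlinarith
    _ ≤ ∫ x in s, f x ∂μ :=
      setIntegral_ge_of_const_le_real hs (measure_ne_top μ s) hfs hf.integrableOn
    _ ≤ ∫ x, f x ∂μ := setIntegral_le_integral hf (.of_forall hf0)

lemma exp_eq_two_rpow (x : ℝ) : exp x = (2 : ℝ) ^ (logb 2 (exp 1) * x) := by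
  rw [rpow_mul zero_le_two, rpow_logb two_pos (by norm_num) (exp_pos 1), exp_one_rpow]

lemma four_rpow_neg_add_two_mul_exp_le {x c : ℝ} (hx : 0 ≤ x) :
    (4 : ℝ) ^ (-x) + 2 * exp (-(x / c)) ≤ (2 : ℝ) ^ (2 - x * min 2 (logb 2 (exp 1) / c)) := by
  set m := min 2 (logb 2 (exp 1) / c)
  have hfour : (4 : ℝ) ^ (-x) ≤ (2 : ℝ) ^ (-(x * m)) := by
    rw [show (4 : ℝ) = 2 ^ (2 : ℝ) by norm_num, ← rpow_mul zero_le_two]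
    exact rpow_le_rpow_of_exponent_le one_le_two
      (by nlinarith [mul_le_mul_of_nonneg_left (min_le_left 2 (logb 2 (exp 1) / c)) hx])
  have hexp : exp (-(x / c)) ≤ (2 : ℝ) ^ (-(x * m)) := by
    rw [exp_eq_two_rpow]
    refine rpow_le_rpow_of_exponent_le one_le_two ?_
    have := mul_le_mul_of_nonneg_left (min_le_right 2 (logb 2 (exp 1) / c)) hx
    rw [mul_div_assoc'] at this
    linarith [show logb 2 (exp 1) * -(x / c) = -(x * logb 2 (exp 1) / c) by ring]
  have hsplit : (2 : ℝ) ^ (2 - x * m) = 4 * (2 : ℝ) ^ (-(x * m)) := by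
    rw [sub_eq_add_neg, rpow_add two_pos]
    norm_num
  have hpos : 0 ≤ (2 : ℝ) ^ (-(x * m)) := by positivity
  linarith

theorem effective_dimension_phase_randomized_general
    (N : ℕ) (K : ℝ)
    (μ : Measure ℂ) [IsProbabilityMeasure μ]
    (trPN : ℂ → ℝ)  -- `trPN β` denotes `tr(P_N · P_β(0))`
    (htrMeas : Measurable trPN)
    (htr01 : ∀ β : ℂ, 0 ≤ trPN β ∧ trPN β ≤ 1)
    (hsubG : ∀ t : ℝ, 0 ≤ t →
      (μ {β : ℂ | t ≤ ‖β‖}).toReal ≤ 2 * Real.exp (-t ^ 2 / K ^ 2))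
    (hpoisson : ∀ β : ℂ, ‖β‖ ^ 2 ≤ (N : ℝ) / 22 →
      1 - (4 : ℝ) ^ (-(N : ℝ)) ≤ trPN β) :
    1 - (2 : ℝ) ^ ((2 : ℝ) - (N : ℝ) * min 2 (Real.logb 2 (Real.exp 1) / (22 * K ^ 2)))
      ≤ ∫ β, trPN β ∂μ := by
  have hN : (0 : ℝ) ≤ N := N.cast_nonneg
  have hint : Integrable trPN μ := .of_bound htrMeas.aestronglyMeasurable 1
    (.of_forall fun β => by rw [norm_eq_abs, abs_le]; constructor <;> linarith [htr01 β])
  have hdisc : MeasurableSet {β : ℂ | ‖β‖ ^ 2 ≤ (N : ℝ) / 22} :=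
    measurableSet_le (by fun_prop) measurable_const
  have htail := measureReal_compl_setOf_sq_norm_le_of_subGaussian hsubG
    (by positivity : (0 : ℝ) ≤ N / 22)
  have hmain := one_sub_sub_le_integral_of_measureReal_compl_le hint (fun β => (htr01 β).1)
    hdisc hpoisson (by positivity) htail
  have herr := four_rpow_neg_add_two_mul_exp_le (c := 22 * K ^ 2) hN
  rw [show -((N : ℝ) / 22) / K ^ 2 = -(N / (22 * K ^ 2)) by ring] at hmain
  linarith

/-- for `ρ = ∫ P_β(0) dμ(β)` a mixture of phase-randomized coherent states
with `μ` sub-Gaussian with constant `K`, assuming the Poisson tail bound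
`tr(P_N P_β(0)) ≥ 1 - 4^{-N}` for all `|β|² ≤ N/22` (with `N ≥ 44`), we have
`tr(P_N ρ) = ∫ tr(P_N P_β(0)) dμ(β) ≥ 1 - 2^{2 - N·min{2, log₂(e)/(22K²)}}`. -/
theorem effective_dimension_phase_randomized
    (N : ℕ) (hN : 44 ≤ N) (K : ℝ) (hK : 0 < K)
    (μ : Measure ℂ) [IsProbabilityMeasure μ]
    (trPN : ℂ → ℝ)  -- `trPN β` denotes `tr(P_N · P_β(0))`
    (htrMeas : Measurable trPN)
    (htr01 : ∀ β : ℂ, 0 ≤ trPN β ∧ trPN β ≤ 1)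
    (hsubG : ∀ t : ℝ, 0 ≤ t →
      (μ {β : ℂ | t ≤ ‖β‖}).toReal ≤ 2 * Real.exp (-t ^ 2 / K ^ 2))
    (hpoisson : ∀ β : ℂ, ‖β‖ ^ 2 ≤ (N : ℝ) / 22 →
      1 - (4 : ℝ) ^ (-(N : ℝ)) ≤ trPN β) :
    1 - (2 : ℝ) ^ ((2 : ℝ) - (N : ℝ) * min 2 (Real.logb 2 (Real.exp 1) / (22 * K ^ 2)))
      ≤ ∫ β, trPN β ∂μ :=
  effective_dimension_phase_randomized_general N K μ trPN htrMeas htr01 hsubG hpoisson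
end

section
/- Let p_1,…,p_k ∈ P([d]), let p̄^k := (1/k!)∑_{π∈S_k} ∏_{i=1}^k p_{π(i)} be the symmetrized product distribution, and p̄ := (1/k)∑_i p_i. Then for every ε > 0, the probability under p̄^k of the set of strings x^k whose empirical distribution m(·) := N(·|x^k)/k satisfies ‖m − p̄‖_1 ≥ ε is at most C·(2d)^k·exp(−ε²k) with an absolute constant C, i.e. ∑_{‖m − p̄‖_1 ≤ ε} p̄^k(T_m) ≥ 1 − C·(2d)^k·exp(−ε²k), where T_m is the set of strings with empirical distribution m. -/
/-!
If the empirical distribution `m` of a string is `ε`-far from the mixture `p̄` in `ℓ¹`, then,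
since `m` and `p̄` have the same total mass, the set `A = {j | p̄ j < m j}` satisfies
`m(A) - p̄(A) > ε/2`. Under a product measure `∏ i, p i` the number of coordinates falling in `A`
is a sum of independent Bernoulli variables whose means average to `p̄(A)`; the Chernoff bound,
with AM-GM to pass to the average, gives at most `(4 e^{-ε²})^k` for each of the `2^d` sets `A`.
The scalar estimate behind it, `e^{-λ(q+t)} (1 - q + q e^λ) ≤ 4 e^{-4t²}` for some `λ ≥ 0`, is
trivial unless `4t² > log 4`, and then `e^λ = 1 / (q(1-t))` works.

The far set is invariant under permuting coordinates and `p̄` does not depend on the order of the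
`p i`, so the bound passes to the symmetrized measure. The far set is empty if `d = 1` or
`ε ≥ 2`; otherwise `2^d (4 e^{-ε²})^k ≤ 2^27 (2d)^k e^{-ε²k}` for `d ≤ 27`, while for `d ≥ 28`
the right side exceeds `1` because `2d e^{-ε²} ≥ 56 e^{-4} > 1`.
-/

open Finset

section

open Real

theorem prod_le_mean_pow {ι : Type*} {s : Finset ι} {z : ι → ℝ} (hz : ∀ i ∈ s, 0 ≤ z i) :
    ∏ i ∈ s, z i ≤ ((∑ i ∈ s, z i) / #s) ^ #s := by
  rcases s.eq_empty_or_nonempty with rfl | hs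
  · simp
  have hn : (0 : ℝ) < #s := by exact_mod_cast hs.card_pos
  have hP : 0 ≤ ∏ i ∈ s, z i := prod_nonneg hz
  have amgm := geom_mean_le_arith_mean_weighted s (fun _ ↦ (#s : ℝ)⁻¹) z
    (fun _ _ ↦ by positivity) (by simp [hn.ne']) hz
  rw [finsetProd_rpow s z hz, ← mul_sum, ← div_eq_inv_mul] at amgm
  calc ∏ i ∈ s, z i = ((∏ i ∈ s, z i) ^ (#s : ℝ)⁻¹) ^ #s := by
        rw [← rpow_natCast, ← rpow_mul hP, inv_mul_cancel₀ hn.ne', rpow_one]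
    _ ≤ _ := pow_le_pow_left₀ (rpow_nonneg hP _) amgm _

section TotalVariation

variable {α : Type*} [Fintype α] {f g : α → ℝ}

theorem sum_abs_sub_eq_two_mul_sum_lt (h : ∑ j, f j = ∑ j, g j) :
    ∑ j, |f j - g j| = 2 * ∑ j ∈ univ.filter (fun j ↦ g j < f j), (f j - g j) := by
  have hsum := sum_filter_add_sum_filter_not univ (fun j ↦ g j < f j) (fun j ↦ f j - g j)
  have habs := sum_filter_add_sum_filter_not univ (fun j ↦ g j < f j) (fun j ↦ |f j - g j|)
  rw [sum_sub_distrib (s := univ), h, sub_self] at hsum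
  rw [sum_congr rfl fun j hj ↦ abs_of_pos (sub_pos.2 (mem_filter.1 hj).2),
    sum_congr rfl fun j hj ↦ abs_of_nonpos (sub_nonpos.2 (not_lt.1 (mem_filter.1 hj).2)),
    sum_neg_distrib] at habs
  linarith

theorem sum_abs_sub_le_add (hf : ∀ j, 0 ≤ f j) (hg : ∀ j, 0 ≤ g j) :
    ∑ j, |f j - g j| ≤ ∑ j, f j + ∑ j, g j := by
  rw [← sum_add_distrib]
  exact sum_le_sum fun j _ ↦ abs_sub_le_iff.2 ⟨by linarith [hg j], by linarith [hf j]⟩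

theorem two_le_card_of_sum_abs_sub_pos (h : ∑ j, f j = ∑ j, g j)
    (hpos : 0 < ∑ j, |f j - g j|) : 2 ≤ Fintype.card α := by
  by_contra! hcard
  have : Subsingleton α := Fintype.card_le_one_iff_subsingleton.1 (by omega)
  rcases isEmpty_or_nonempty α with hα | ⟨⟨a⟩⟩
  · simp at hpos
  rw [Fintype.sum_subsingleton _ a, Fintype.sum_subsingleton _ a] at h
  rw [Fintype.sum_subsingleton _ a, h, sub_self, abs_zero] at hpos
  exact hpos.false

end TotalVariation

section Distributions

variable {ι α : Type*} [Fintype ι]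

noncomputable def empirical [DecidableEq α] (x : ι → α) (j : α) : ℝ :=
  #{i | x i = j} / Fintype.card ι

noncomputable def mixture (p : ι → α → ℝ) (j : α) : ℝ := 1 / Fintype.card ι * ∑ i, p i j

noncomputable def symmetrized [DecidableEq ι] (p : ι → α → ℝ) (x : ι → α) : ℝ :=
  ((Fintype.card ι).factorial : ℝ)⁻¹ * ∑ σ : Equiv.Perm ι, ∏ i, p (σ i) (x i)

variable {p : ι → α → ℝ}

theorem sum_empirical [DecidableEq α] (x : ι → α) (A : Finset α) :
    ∑ j ∈ A, empirical x j = #{i | x i ∈ A} / Fintype.card ι := by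
  simp only [empirical, ← sum_div]
  rw [← Nat.cast_sum]
  simp only [card_filter]
  rw [sum_comm]
  simp only [sum_ite_eq]

theorem sum_mixture (A : Finset α) :
    ∑ j ∈ A, mixture p j = (∑ i, ∑ a ∈ A, p i a) / Fintype.card ι := by
  simp only [mixture, ← mul_sum, sum_comm (s := A)]
  ring

theorem mixture_nonneg (hp : ∀ i a, 0 ≤ p i a) (a : α) : 0 ≤ mixture p a :=
  mul_nonneg (by positivity) (sum_nonneg fun i _ ↦ hp i a)

theorem mixture_comp_perm (σ : Equiv.Perm ι) : mixture (fun i ↦ p (σ i)) = mixture p :=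
  funext fun j ↦ by simp only [mixture, Equiv.sum_comp σ (fun i ↦ p i j)]

theorem sum_empirical_eq_sum_mixture [Fintype α] [DecidableEq α] (hp1 : ∀ i, ∑ a, p i a = 1)
    (x : ι → α) : ∑ j, empirical x j = ∑ j, mixture p j := by
  rw [sum_empirical, sum_mixture]
  simp [hp1]

theorem sum_abs_empirical_sub_mixture_le_two [Fintype α] [DecidableEq α]
    (hp : ∀ i a, 0 ≤ p i a) (hp1 : ∀ i, ∑ a, p i a = 1) (x : ι → α) :
    ∑ j, |empirical x j - mixture p j| ≤ 2 := by
  have hmix : ∑ j, mixture p j ≤ 1 := by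
    rw [sum_mixture]
    simpa [hp1] using div_self_le_one (Fintype.card ι : ℝ)
  have := sum_abs_sub_le_add (f := empirical x) (fun j ↦ by unfold empirical; positivity)
    (mixture_nonneg hp)
  rw [sum_empirical_eq_sum_mixture hp1] at this
  linarith

theorem sum_prod_eq_one [DecidableEq ι] [Fintype α] (hp1 : ∀ i, ∑ a, p i a = 1) :
    ∑ x : ι → α, ∏ i, p i (x i) = 1 := by
  rw [← Fintype.prod_sum]
  simp [hp1]

theorem symmetrized_nonneg [DecidableEq ι] (hp : ∀ i a, 0 ≤ p i a) (x : ι → α) :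
    0 ≤ symmetrized p x :=
  mul_nonneg (by positivity) (sum_nonneg fun σ _ ↦ prod_nonneg fun i _ ↦ hp _ _)

theorem sum_symmetrized_eq_one [DecidableEq ι] [Fintype α] (hp1 : ∀ i, ∑ a, p i a = 1) :
    ∑ x : ι → α, symmetrized p x = 1 := by
  simp only [symmetrized, ← mul_sum]
  rw [sum_comm]
  simp only [sum_prod_eq_one fun i ↦ hp1 _, sum_const, card_univ, Fintype.card_perm,
    nsmul_eq_mul, mul_one]
  exact inv_mul_cancel₀ (by positivity)

theorem sum_symmetrized_le [DecidableEq ι] {S : Finset (ι → α)} {B : ℝ}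
    (h : ∀ σ : Equiv.Perm ι, ∑ x ∈ S, ∏ i, p (σ i) (x i) ≤ B) :
    ∑ x ∈ S, symmetrized p x ≤ B := by
  simp only [symmetrized, ← mul_sum]
  rw [sum_comm]
  calc _ ≤ ((Fintype.card ι).factorial : ℝ)⁻¹ * ∑ _σ : Equiv.Perm ι, B := by
        gcongr with σ
        exact h σ
    _ = B := by
        rw [sum_const, card_univ, Fintype.card_perm, nsmul_eq_mul, ← mul_assoc,
          inv_mul_cancel₀ (by positivity), one_mul]

end Distributions

section Chernoff

variable {ι α : Type*} [Fintype ι] [DecidableEq ι] [Fintype α] [DecidableEq α]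
  {p : ι → α → ℝ}

theorem sum_exp_mul_card_mul_prod (hp1 : ∀ i, ∑ a, p i a = 1) (A : Finset α) (l : ℝ) :
    ∑ x : ι → α, exp (l * #{i | x i ∈ A}) * ∏ i, p i (x i) =
      ∏ i, (1 - ∑ a ∈ A, p i a + (∑ a ∈ A, p i a) * exp l) := by
  have hterm (x : ι → α) : exp (l * #{i | x i ∈ A}) * ∏ i, p i (x i) =
      ∏ i, (if x i ∈ A then exp l else 1) * p i (x i) := by
    rw [prod_mul_distrib, prod_ite, prod_const_one, mul_one, prod_const, ← exp_nat_mul,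
      mul_comm l]
  simp_rw [hterm]
  rw [← Fintype.prod_sum fun i a ↦ (if a ∈ A then exp l else 1) * p i a]
  refine prod_congr rfl fun i _ ↦ ?_
  have hcompl : ∑ a ∈ Aᶜ, p i a = 1 - ∑ a ∈ A, p i a := by
    rw [← hp1 i, ← sum_add_sum_compl A (p i), add_sub_cancel_left]
  have hA : ∑ a ∈ A, (if a ∈ A then exp l else 1) * p i a = exp l * ∑ a ∈ A, p i a := by
    rw [mul_sum]
    exact sum_congr rfl fun a ha ↦ by rw [if_pos ha]
  have hAc : ∑ a ∈ Aᶜ, (if a ∈ A then exp l else 1) * p i a = ∑ a ∈ Aᶜ, p i a :=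
    sum_congr rfl fun a ha ↦ by rw [if_neg (mem_compl.1 ha), one_mul]
  rw [← sum_add_sum_compl A, hA, hAc, hcompl]
  ring

theorem sum_prod_card_mem_gt_le (hp : ∀ i a, 0 ≤ p i a) (hp1 : ∀ i, ∑ a, p i a = 1)
    (A : Finset α) (θ : ℝ) {l : ℝ} (hl : 0 ≤ l) :
    ∑ x ∈ univ.filter fun x : ι → α ↦ Fintype.card ι * θ < #{i | x i ∈ A}, ∏ i, p i (x i) ≤
      (exp (-(l * θ)) * (1 - ∑ a ∈ A, mixture p a + (∑ a ∈ A, mixture p a) * exp l)) ^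
        Fintype.card ι := by
  set n := Fintype.card ι
  set q : ι → ℝ := fun i ↦ ∑ a ∈ A, p i a
  have hq0 (i : ι) : 0 ≤ q i := sum_nonneg fun a _ ↦ hp i a
  have hq1 (i : ι) : q i ≤ 1 := hp1 i ▸ sum_le_univ_sum_of_nonneg (hp i)
  have hweight (x : ι → α) : 0 ≤ ∏ i, p i (x i) := prod_nonneg fun i _ ↦ hp i (x i)
  have hmarkov : ∑ x ∈ univ.filter fun x : ι → α ↦ n * θ < #{i | x i ∈ A}, ∏ i, p i (x i) ≤
      exp (-(l * θ)) ^ n * ∑ x : ι → α, exp (l * #{i | x i ∈ A}) * ∏ i, p i (x i) := by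
    rw [mul_sum, ← exp_nat_mul]
    refine (sum_le_sum fun x hx ↦ ?_).trans (sum_le_sum_of_subset_of_nonneg (filter_subset _ _)
      fun x _ _ ↦ mul_nonneg (exp_nonneg _) (mul_nonneg (exp_nonneg _) (hweight x)))
    rw [← mul_assoc, ← exp_add]
    refine le_mul_of_one_le_left (hweight x) (one_le_exp ?_)
    have := (mem_filter.1 hx).2
    nlinarith
  have hmean : ((∑ i, (1 - q i + q i * exp l)) / n) ^ n =
      (1 - ∑ a ∈ A, mixture p a + (∑ a ∈ A, mixture p a) * exp l) ^ n := by
    rw [sum_mixture]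
    rcases (Fintype.card ι).eq_zero_or_pos with hn | hn
    · simp [n, hn]
    have hn' : (n : ℝ) ≠ 0 := by positivity
    rw [sum_add_distrib, sum_sub_distrib, ← sum_mul, sum_const, card_univ, nsmul_one]
    field_simp
    ring
  calc _ ≤ exp (-(l * θ)) ^ n * ∏ i, (1 - q i + q i * exp l) := by
        rwa [sum_exp_mul_card_mul_prod hp1] at hmarkov
    _ ≤ exp (-(l * θ)) ^ n * ((∑ i, (1 - q i + q i * exp l)) / n) ^ n := by
        gcongr
        exact prod_le_mean_pow fun i _ ↦ by nlinarith [hq1 i, mul_nonneg (hq0 i) (exp_nonneg l)]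
    _ = _ := by rw [hmean, mul_pow]

end Chernoff

theorem log_chernoff_le {q t : ℝ} (hq : 0 < q) (hqt : q + t ≤ 1) (ht : 0 ≤ t)
    (h4 : log 4 < 4 * t ^ 2) :
    (q + t) * log (q * (1 - t)) + log (1 - q + (1 - t)⁻¹) ≤ log 4 - 4 * t ^ 2 := by
  set u := 1 - t
  have hu : 0 < u := by linarith
  have hlog4 : log 4 = 2 * log 2 := by
    rw [show (4 : ℝ) = 2 ^ 2 by norm_num, log_pow]
    norm_num
  have hu_small : u ≤ 0.4114 := by nlinarith [log_two_gt_d9]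
  -- The left side is at most an affine function of `q` (chord of `q log q` on `[0, u]`, tangent
  -- of `log` at `u`), so it suffices to check `q = u` and `q = 0`; there `log u` is bounded by
  -- the tangent of `log` at `1/6`.
  have htangent : log u ≤ 6 * u - 1 - log 2 - log 3 := by
    have := log_le_sub_one_of_pos (show 0 < 6 * u by positivity)
    rw [show (6 : ℝ) * u = 2 * 3 * u by ring, log_mul (by positivity) hu.ne',
      log_mul (by norm_num) (by norm_num)] at this
    linarith
  have h_at_u : log u + u - u ^ 2 ≤ log 4 - 4 * t ^ 2 := by
    nlinarith [log_two_gt_d9, log_three_gt_d9]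
  have h_at_zero : (1 - 2 * u) * log u - 1 + 2 * u ≤ log 4 - 4 * t ^ 2 := by
    have := mul_le_mul_of_nonneg_left htangent (show 0 ≤ 1 - 2 * u by linarith)
    nlinarith [log_two_gt_d9, log_three_gt_d9, sq_nonneg (u - 0.35)]
  have hlast : log (1 - q + u⁻¹) ≤ u - q * u - log u := by
    rw [show 1 - q + u⁻¹ = (1 + (u - q * u)) / u by field_simp; ring,
      log_div (by nlinarith) hu.ne']
    have := log_le_sub_one_of_pos (show 0 < 1 + (u - q * u) by nlinarith)
    linarith
  have hqlog : q * log q ≤ q * log u :=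
    mul_le_mul_of_nonneg_left (log_le_log hq (by linarith)) hq.le
  have htlog : t * log q ≤ t * (log u + q / u - 1) := by
    have := log_le_sub_one_of_pos (show 0 < q / u by positivity)
    rw [log_div hq.ne' hu.ne'] at this
    exact mul_le_mul_of_nonneg_left (by linarith) ht
  obtain ⟨v, rfl⟩ : ∃ v, q = v * u := ⟨q / u, by field_simp⟩
  have hv : 0 ≤ v := by nlinarith
  have hv1 : v ≤ 1 := by nlinarith
  rw [log_mul hq.ne' hu.ne']
  rw [mul_div_assoc, div_self hu.ne', mul_one] at htlog
  nlinarith [mul_nonneg (sub_nonneg.2 hv1) (sub_nonneg.2 h_at_zero),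
    mul_nonneg hv (sub_nonneg.2 h_at_u)]

theorem exists_chernoff_exponent {q t : ℝ} (hq : 0 ≤ q) (ht : 0 ≤ t) (hqt : q + t ≤ 1) :
    ∃ l, 0 ≤ l ∧ exp (-(l * (q + t))) * (1 - q + q * exp l) ≤ 4 * exp (-(4 * t ^ 2)) := by
  have hfour : exp (log 4 - 4 * t ^ 2) = 4 * exp (-(4 * t ^ 2)) := by
    rw [sub_eq_add_neg, exp_add, exp_log (by norm_num)]
  rcases le_or_gt (4 * t ^ 2) (log 4) with h4 | h4
  · refine ⟨0, le_rfl, ?_⟩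
    simpa [← hfour] using h4
  rcases hq.eq_or_lt with rfl | hq
  · refine ⟨4 * t, by positivity, ?_⟩
    have := exp_pos (-(4 * t ^ 2))
    rw [show -(4 * t * (0 + t)) = -(4 * t ^ 2) by ring]
    linarith
  have hu : 0 < 1 - t := by linarith
  refine ⟨-log (q * (1 - t)), neg_nonneg.2 (log_nonpos (by positivity) (by nlinarith)), ?_⟩
  have hpos : 0 < 1 - q + (1 - t)⁻¹ := by have := inv_pos.2 hu; linarith
  calc exp (-(-log (q * (1 - t)) * (q + t))) * (1 - q + q * exp (-log (q * (1 - t))))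
      = exp ((q + t) * log (q * (1 - t)) + log (1 - q + (1 - t)⁻¹)) := by
        rw [exp_add, exp_log hpos, exp_neg (log _), exp_log (by positivity),
          show q * (q * (1 - t))⁻¹ = (1 - t)⁻¹ by field_simp]
        ring_nf
    _ ≤ exp (log 4 - 4 * t ^ 2) := exp_le_exp.2 (log_chernoff_le hq hqt ht h4)
    _ = 4 * exp (-(4 * t ^ 2)) := hfour

section Concentration

variable {ι α : Type*} [Fintype ι] [DecidableEq ι] [Fintype α] [DecidableEq α]
  {p : ι → α → ℝ}

theorem sum_prod_card_mem_gt_le_four_mul_exp (hp : ∀ i a, 0 ≤ p i a)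
    (hp1 : ∀ i, ∑ a, p i a = 1) (A : Finset α) {t : ℝ} (ht : 0 ≤ t) :
    ∑ x ∈ univ.filter (fun x : ι → α ↦
        Fintype.card ι * (∑ a ∈ A, mixture p a + t) < #{i | x i ∈ A}), ∏ i, p i (x i) ≤
      (4 * exp (-(4 * t ^ 2))) ^ Fintype.card ι := by
  set q := ∑ a ∈ A, mixture p a
  have hq : 0 ≤ q := sum_nonneg fun a _ ↦ mixture_nonneg hp a
  rcases le_or_gt (q + t) 1 with hqt | hqt
  · obtain ⟨l, hl, hbound⟩ := exists_chernoff_exponent hq ht hqt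
    refine (sum_prod_card_mem_gt_le hp hp1 A (q + t) hl).trans (pow_le_pow_left₀ ?_ hbound _)
    have : 0 ≤ q * exp l := mul_nonneg hq (exp_nonneg l)
    exact mul_nonneg (exp_nonneg _) (by linarith)
  · rw [filter_false_of_mem, sum_empty]
    · positivity
    intro x _
    rw [not_lt]
    calc (#{i | x i ∈ A} : ℝ) ≤ Fintype.card ι := by exact_mod_cast card_le_univ _
      _ ≤ Fintype.card ι * (q + t) := le_mul_of_one_le_right (Nat.cast_nonneg _) hqt.le

theorem sum_prod_filter_lt_sum_abs_le (hp : ∀ i a, 0 ≤ p i a) (hp1 : ∀ i, ∑ a, p i a = 1)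
    {ε : ℝ} (hε : 0 < ε) :
    ∑ x ∈ univ.filter (fun x : ι → α ↦ ε < ∑ j, |empirical x j - mixture p j|),
        ∏ i, p i (x i) ≤
      2 ^ Fintype.card α * (4 * exp (-ε ^ 2)) ^ Fintype.card ι := by
  set excess : (ι → α) → Finset α := fun x ↦ univ.filter fun j ↦ mixture p j < empirical x j
  set tail : Finset α → Finset (ι → α) := fun A ↦ univ.filter fun x ↦
    Fintype.card ι * (∑ a ∈ A, mixture p a + ε / 2) < #{i | x i ∈ A}
  have hcover (x : ι → α) (hx : ε < ∑ j, |empirical x j - mixture p j|) :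
      x ∈ tail (excess x) := by
    rw [sum_abs_sub_eq_two_mul_sum_lt (sum_empirical_eq_sum_mixture hp1 x), sum_sub_distrib,
      sum_empirical] at hx
    have hS : 0 ≤ ∑ j ∈ excess x, mixture p j := sum_nonneg fun j _ ↦ mixture_nonneg hp j
    simp only [tail, mem_filter, mem_univ, true_and]
    rcases (Fintype.card ι).eq_zero_or_pos with hn | hn
    · rw [hn, Nat.cast_zero, div_zero] at hx
      linarith
    · rw [← lt_div_iff₀' (by exact_mod_cast hn)]
      linarith
  calc _ = ∑ A, ∑ x ∈ univ.filter (fun x : ι → α ↦ ε < ∑ j, |empirical x j - mixture p j|)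
          with excess x = A, ∏ i, p i (x i) := (sum_fiberwise _ _ _).symm
    _ ≤ ∑ A, ∑ x ∈ tail A, ∏ i, p i (x i) := by
        refine sum_le_sum fun A _ ↦ sum_le_sum_of_subset_of_nonneg (fun x hx ↦ ?_)
          fun x _ _ ↦ prod_nonneg fun i _ ↦ hp i (x i)
        obtain ⟨hfar, rfl⟩ := mem_filter.1 hx
        exact hcover x (mem_filter.1 hfar).2
    _ ≤ ∑ _A : Finset α, (4 * exp (-ε ^ 2)) ^ Fintype.card ι := by
        refine sum_le_sum fun A _ ↦ ?_
        have := sum_prod_card_mem_gt_le_four_mul_exp hp hp1 A (half_pos hε).le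
        rwa [show 4 * (ε / 2) ^ 2 = ε ^ 2 by ring] at this
    _ = _ := by
        rw [sum_const, card_univ, Fintype.card_finset, nsmul_eq_mul]
        push_cast
        ring

theorem sum_symmetrized_filter_lt_sum_abs_le (hp : ∀ i a, 0 ≤ p i a)
    (hp1 : ∀ i, ∑ a, p i a = 1) {ε : ℝ} (hε : 0 < ε) :
    ∑ x ∈ univ.filter (fun x : ι → α ↦ ε < ∑ j, |empirical x j - mixture p j|),
        symmetrized p x ≤
      2 ^ Fintype.card α * (4 * exp (-ε ^ 2)) ^ Fintype.card ι :=
  sum_symmetrized_le fun σ ↦ by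
    simpa only [mixture_comp_perm] using
      sum_prod_filter_lt_sum_abs_le (fun i ↦ hp (σ i)) (fun i ↦ hp1 (σ i)) hε

end Concentration

theorem exp_four_lt : exp 4 < 56 := by
  calc exp 4 = exp 1 ^ 4 := by rw [← exp_nat_mul]; norm_num
    _ < 2.7182818286 ^ 4 := pow_lt_pow_left₀ exp_one_lt_d9 (exp_pos 1).le (by norm_num)
    _ < 56 := by norm_num

theorem le_two_pow_27_mul_exp {b ε : ℝ} {d k : ℕ} (hd : 2 ≤ d) (hε : ε ^ 2 ≤ 4) (hb1 : b ≤ 1)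
    (hb : b ≤ 2 ^ d * (4 * exp (-ε ^ 2)) ^ k) :
    b ≤ 2 ^ 27 * (2 * d : ℝ) ^ k * exp (-ε ^ 2 * k) := by
  rw [mul_assoc, mul_comm (-ε ^ 2), exp_nat_mul, ← mul_pow]
  rcases le_or_gt d 27 with hd27 | hd27
  · refine hb.trans (mul_le_mul (pow_le_pow_right₀ one_le_two hd27)
      (pow_le_pow_left₀ (by positivity) ?_ k) (by positivity) (by positivity))
    have : (2 : ℝ) ≤ d := by exact_mod_cast hd
    gcongr
    linarith
  · have hd56 : (56 : ℝ) ≤ 2 * d := by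
      have : (28 : ℝ) ≤ d := by exact_mod_cast hd27
      linarith
    have hexp : 56⁻¹ ≤ exp (-ε ^ 2) :=
      calc (56 : ℝ)⁻¹ ≤ (exp 4)⁻¹ := inv_anti₀ (exp_pos 4) exp_four_lt.le
        _ = exp (-4) := (exp_neg 4).symm
        _ ≤ exp (-ε ^ 2) := exp_le_exp.2 (by linarith)
    have hbase : 1 ≤ 2 * (d : ℝ) * exp (-ε ^ 2) :=
      calc (1 : ℝ) = 56 * 56⁻¹ := by norm_num
        _ ≤ 2 * d * exp (-ε ^ 2) := mul_le_mul hd56 hexp (by norm_num) (by positivity)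
    calc b ≤ 2 ^ 27 * 1 := by linarith
      _ ≤ 2 ^ 27 * (2 * d * exp (-ε ^ 2)) ^ k := by gcongr; exact one_le_pow₀ hbase

theorem one_sub_le_sum_symmetrized_near_mixture {ι α : Type*} [Fintype ι] [DecidableEq ι]
    [Fintype α] [DecidableEq α] {p : ι → α → ℝ} (hp : ∀ i a, 0 ≤ p i a)
    (hp1 : ∀ i, ∑ a, p i a = 1) {ε : ℝ} (hε : 0 < ε) :
    1 - 2 ^ 27 * (2 * Fintype.card α : ℝ) ^ Fintype.card ι * exp (-ε ^ 2 * Fintype.card ι) ≤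
      ∑ x ∈ univ.filter (fun x : ι → α ↦ ∑ j, |empirical x j - mixture p j| ≤ ε),
        symmetrized p x := by
  have hsplit := sum_filter_add_sum_filter_not univ
    (fun x : ι → α ↦ ∑ j, |empirical x j - mixture p j| ≤ ε) (symmetrized p)
  simp only [not_le, sum_symmetrized_eq_one hp1] at hsplit
  have hnear := sum_nonneg fun x (_ : x ∈ univ.filter (fun x : ι → α ↦
    ∑ j, |empirical x j - mixture p j| ≤ ε)) ↦ symmetrized_nonneg hp x
  suffices ∑ x ∈ univ.filter (fun x : ι → α ↦ ε < ∑ j, |empirical x j - mixture p j|),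
      symmetrized p x ≤
        2 ^ 27 * (2 * Fintype.card α : ℝ) ^ Fintype.card ι * exp (-ε ^ 2 * Fintype.card ι) by
    linarith
  rcases (univ.filter fun x : ι → α ↦
    ε < ∑ j, |empirical x j - mixture p j|).eq_empty_or_nonempty with hempty | ⟨x, hx⟩
  · rw [hempty, sum_empty]
    positivity
  have hfar := (mem_filter.1 hx).2
  refine le_two_pow_27_mul_exp
    (two_le_card_of_sum_abs_sub_pos (sum_empirical_eq_sum_mixture hp1 x) (hε.trans hfar))
    ?_ (by linarith) (sum_symmetrized_filter_lt_sum_abs_le hp hp1 hε)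
  nlinarith [hfar.trans_le (sum_abs_empirical_sub_mixture_le_two hp hp1 x)]

end

/-- under the symmetrized product distribution
`p̄^k = (1/k!)∑_{π∈S_k} ∏_i p_{π(i)}`, the set of strings whose empirical distribution is
within total-variation distance `ε` of `p̄ = (1/k)∑_i p_i` has probability at least
`1 - C·(2d)^k·exp(-ε²k)` for an absolute constant `C > 0`. -/
theorem symmetrized_type_concentration :
    ∃ C : ℝ, 0 < C ∧
      ∀ (d k : ℕ) (p : Fin k → Fin d → ℝ),
        (∀ i n, 0 ≤ p i n) → (∀ i, ∑ n, p i n = 1) →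
        ∀ ε : ℝ, 0 < ε →
          1 - C * ((2 * d : ℝ)) ^ k * Real.exp (-ε ^ 2 * k) ≤
            ∑ x ∈ (Finset.univ : Finset (Fin k → Fin d)).filter (fun x =>
                ∑ j : Fin d,
                  |(((Finset.univ : Finset (Fin k)).filter (fun i => x i = j)).card : ℝ) / k
                    - (1 / k : ℝ) * ∑ i, p i j| ≤ ε),
              (k.factorial : ℝ)⁻¹ * ∑ π : Equiv.Perm (Fin k), ∏ i, p (π i) (x i) := by
  refine ⟨2 ^ 27, by norm_num, fun d k p hp hp1 ε hε ↦ ?_⟩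
  simpa [empirical, mixture, symmetrized] using one_sub_le_sum_symmetrized_near_mixture hp hp1 hε
end

section
/- Assume the entropy power-type inequality S(X ⊞_τ Y) ≥ g(L_τ(X) + R_τ(Y)) holds for all single-mode bosonic states X, Y and τ ∈ [0,1], where L_τ(X) := g^{−1}(S(X ⊞_τ |0⟩⟨0|)) and R_τ(Y) := g^{−1}(S(|0⟩⟨0| ⊞_τ Y)). Then for every state σ with S(|0⟩⟨0| ⊞_τ σ) ≤ g((1−τ)P), the quantity S(S_E ⊞_τ σ) − S(|0⟩⟨0| ⊞_τ σ) is at least g(τE + (1−τ)P) − g((1−τ)P), where S_E is the thermal state of mean photon number E (so that L_τ(S_E) = τE). -/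
/-!
With `R = R_τ(σ)`, the conjectured inequality for `X = S_E`, `Y = σ` gives
`S(S_E ⊞_τ σ) ≥ g(τE + R)`, while `S(|0⟩⟨0| ⊞_τ σ) = g(R)`. So the entropy difference is at least
the increment `g(R + τE) − g(R)`. The increments `x ↦ g(x + c) − g(x)` of the concave function `g`
decrease, and `R ≤ (1−τ)P` because `g⁻¹` is monotone; hence the bound.
-/

/-- The Gordon function `g(x) = (x+1)log₂(x+1) − x·log₂x` (with `g(0) = 0`). -/
noncomputable def gordon (x : ℝ) : ℝ :=
  (x + 1) * Real.logb 2 (x + 1) - x * Real.logb 2 x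

open Real

theorem ConcaveOn.map_add_sub_le_map_add_sub {𝕜 : Type*} [Field 𝕜] [LinearOrder 𝕜]
    [IsStrictOrderedRing 𝕜] {s : Set 𝕜} {f : 𝕜 → 𝕜} (hf : ConcaveOn 𝕜 s f) {a b c : 𝕜}
    (ha : a ∈ s) (hbc : b + c ∈ s) (hab : a ≤ b) (hc : 0 ≤ c) :
    f (b + c) - f b ≤ f (a + c) - f a := by
  rcases (add_nonneg (sub_nonneg.2 hab) hc).eq_or_lt with hd | hd
  · obtain rfl : b = a := by linarith
    obtain rfl : c = 0 := by linarith
    simp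
  -- `b` and `a + c` are the convex combinations of `a` and `b + c` with swapped weights.
  set d := b - a + c
  have hw : (b - a) / d + c / d = 1 := by rw [← add_div, div_self hd.ne']
  have hb := hf.2 ha hbc (div_nonneg hc hd.le) (div_nonneg (sub_nonneg.2 hab) hd.le)
    (by rw [add_comm]; exact hw)
  have hac := hf.2 ha hbc (div_nonneg (sub_nonneg.2 hab) hd.le) (div_nonneg hc hd.le) hw
  have eb : (c / d) • a + ((b - a) / d) • (b + c) = b := by
    simp only [smul_eq_mul]; field_simp; ring
  have eac : ((b - a) / d) • a + (c / d) • (b + c) = a + c := by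
    simp only [smul_eq_mul]; field_simp; ring
  rw [eb] at hb
  rw [eac] at hac
  simp only [smul_eq_mul] at hb hac
  linear_combination hb + hac - (f a + f (b + c)) * hw

theorem gordon_eq_div_log (x : ℝ) :
    gordon x = ((x + 1) * log (x + 1) - x * log x) / log 2 := by
  simp only [gordon, logb]
  ring

theorem continuous_gordon : Continuous gordon := by
  simp only [funext gordon_eq_div_log]
  exact ((continuous_mul_log.comp (continuous_add_const 1)).sub continuous_mul_log).div_const _

theorem hasDerivAt_gordon {x : ℝ} (hx : 0 < x) :
    HasDerivAt gordon (logb 2 ((x + 1) / x)) x := by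
  have h : HasDerivAt (fun y => ((y + 1) * log (y + 1) - y * log y) / log 2)
      ((log (x + 1) + 1 - (log x + 1)) / log 2) x :=
    ((((hasDerivAt_mul_log (by positivity)).comp x ((hasDerivAt_id x).add_const 1)).sub
      (hasDerivAt_mul_log hx.ne')).div_const _).congr_deriv (by simp)
  rw [funext gordon_eq_div_log, logb, log_div (by positivity) hx.ne']
  exact h.congr_deriv (by ring)

theorem concaveOn_gordon : ConcaveOn ℝ (Set.Ici 0) gordon := by
  refine AntitoneOn.concaveOn_of_deriv (convex_Ici 0) continuous_gordon.continuousOn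
    (fun x hx => ?_) (fun x hx y hy hxy => ?_)
  · rw [interior_Ici] at hx
    exact (hasDerivAt_gordon hx).differentiableAt.differentiableWithinAt
  · rw [interior_Ici, Set.mem_Ioi] at hx hy
    rw [(hasDerivAt_gordon hx).deriv, (hasDerivAt_gordon hy).deriv]
    refine logb_le_logb_of_le one_lt_two (by positivity) ?_
    rw [div_le_div_iff₀ hy hx]
    linarith

/-- assuming the conjectured entropy power-type inequality
`S(X ⊞_τ Y) ≥ g(L_τ(X) + R_τ(Y))` with `L_τ(X) = g⁻¹(S(X ⊞_τ |0⟩⟨0|))` and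
`R_τ(Y) = g⁻¹(S(|0⟩⟨0| ⊞_τ Y))`, every jammer state `σ` with
`S(|0⟩⟨0| ⊞_τ σ) ≤ g((1−τ)P)` satisfies
`S(S_E ⊞_τ σ) − S(|0⟩⟨0| ⊞_τ σ) ≥ g(τE + (1−τ)P) − g((1−τ)P)`,
where `S_E` is the thermal state of mean photon number `E` (so `L_τ(S_E) = τE`). -/
theorem capacity_lower_bound_from_conjecture {State : Type*}
    (S : State → ℝ)                      -- von Neumann entropy
    (box : ℝ → State → State → State)    -- beam splitter `⊞_τ`
    (vac : State)                        -- vacuum `|0⟩⟨0|`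
    (thermal : ℝ → State)                -- thermal state `S_N`
    (ginv : ℝ → ℝ)                       -- inverse Gordon function
    (τ E P : ℝ) (hτ : τ ∈ Set.Icc (0:ℝ) 1) (hE : 0 ≤ E) (hP : 0 ≤ P)
    (hginv_mono : StrictMonoOn ginv (Set.Ici 0))
    (hginv_nonneg : ∀ y, 0 ≤ y → 0 ≤ ginv y)
    (hginv_left : ∀ x, 0 ≤ x → ginv (gordon x) = x)
    (hginv_right : ∀ y, 0 ≤ y → gordon (ginv y) = y)
    (hS_nonneg : ∀ X Y : State, 0 ≤ S (box τ X Y))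
    (hSEvac : S (box τ (thermal E) vac) = gordon (τ * E))
    (hconj : ∀ X Y : State,
      gordon (ginv (S (box τ X vac)) + ginv (S (box τ vac Y))) ≤ S (box τ X Y)) :
    ∀ σ : State, S (box τ vac σ) ≤ gordon ((1 - τ) * P) →
      gordon (τ * E + (1 - τ) * P) - gordon ((1 - τ) * P)
        ≤ S (box τ (thermal E) σ) - S (box τ vac σ) := by
  intro σ hσ
  have hτE : 0 ≤ τ * E := mul_nonneg hτ.1 hE
  have hP' : 0 ≤ (1 - τ) * P := mul_nonneg (sub_nonneg.2 hτ.2) hP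
  have hvac : 0 ≤ S (box τ vac σ) := hS_nonneg _ _
  set R := ginv (S (box τ vac σ))
  have hR_le : R ≤ (1 - τ) * P := by
    simpa only [hginv_left _ hP'] using hginv_mono.monotoneOn hvac (hvac.trans hσ) hσ
  have hconjσ : gordon (τ * E + R) ≤ S (box τ (thermal E) σ) := by
    simpa only [hSEvac, hginv_left _ hτE] using hconj (thermal E) σ
  calc gordon (τ * E + (1 - τ) * P) - gordon ((1 - τ) * P)
      = gordon ((1 - τ) * P + τ * E) - gordon ((1 - τ) * P) := by rw [add_comm]
    _ ≤ gordon (R + τ * E) - gordon R :=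
      concaveOn_gordon.map_add_sub_le_map_add_sub (hginv_nonneg _ hvac)
        (Set.mem_Ici.2 (add_nonneg hP' hτE)) hR_le hτE
    _ ≤ S (box τ (thermal E) σ) - S (box τ vac σ) := by
      rw [hginv_right _ hvac, add_comm]
      linarith
end
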